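/- arXiv:2101.06648 — 3 statements merged into one kernel-verified Lean document; each statement's English description precedes it below -/
import Mathlib

section
/- Let k be a non-archimedean field of mixed characteristic (0,p) with |p|=p^{-1}, let z₁ ∈ k with z₁ ≠ 0, and let ρ be a real number with 0 ≤ ρ < |z₁|. Writing T^p - z₁^p = Σ_{i=1}^{p} γ_i (T - z₁)^i with γ_i = C(p,i) z₁^{p-i}, the maximum max_{1 ≤ i ≤ p} |γ_i| ρ^i equals p^{-1} ρ |z₁|^{p-1} if ρ ≤ |z₁| p^{-1/(p-1)}, and equals ρ^p if ρ ≥ |z₁| p^{-1/(p-1)}. -/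
/-- Gauss-norm computation: for `T^p - z₁^p = Σ_{i=1}^p γ_i (T-z₁)^i` with
`γ_i = C(p,i) z₁^(p-i)`, the maximum `max_{1 ≤ i ≤ p} |γ_i| ρ^i` equals
`p⁻¹ ρ |z₁|^(p-1)` when `ρ ≤ |z₁| p^(-1/(p-1))` and `ρ^p` when
`ρ ≥ |z₁| p^(-1/(p-1))`. -/
theorem gauss_norm_of_pth_power {k : Type*} [Field k] [CharZero k]
    (p : ℕ) [hp : Fact p.Prime]
    (abv : AbsoluteValue k ℝ)
    (hna : ∀ x y : k, abv (x + y) ≤ max (abv x) (abv y))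
    (hpv : abv (p : k) = (p : ℝ)⁻¹)
    (z₁ : k) (hz : z₁ ≠ 0) (ρ : ℝ) (hρ0 : 0 ≤ ρ) (hρ : ρ < abv z₁) :
    (ρ ≤ abv z₁ * (p : ℝ) ^ (-(1 : ℝ) / ((p : ℝ) - 1)) →
      (Finset.Icc 1 p).sup' (Finset.nonempty_Icc.mpr hp.out.one_lt.le)
          (fun i => abv (((p.choose i : ℕ) : k) * z₁ ^ (p - i)) * ρ ^ i)
        = (p : ℝ)⁻¹ * ρ * (abv z₁) ^ (p - 1)) ∧
    (abv z₁ * (p : ℝ) ^ (-(1 : ℝ) / ((p : ℝ) - 1)) ≤ ρ →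
      (Finset.Icc 1 p).sup' (Finset.nonempty_Icc.mpr hp.out.one_lt.le)
          (fun i => abv (((p.choose i : ℕ) : k) * z₁ ^ (p - i)) * ρ ^ i)
        = ρ ^ p) := by
  have hp2 : 2 ≤ p := hp.out.two_le
  have hz1 : 0 < abv z₁ := abv.pos hz
  have hppos : (0:ℝ) < (p:ℝ) := by positivity
  -- abv of any natural number is ≤ 1
  have habs_nat : ∀ n : ℕ, abv (n : k) ≤ 1 := by
    intro n
    induction n with
    | zero => simp
    | succ n ih =>
      push_cast
      calc abv ((n:k) + 1) ≤ max (abv (n:k)) (abv 1) := hna _ _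
        _ ≤ 1 := by simp [ih]
  set f : ℕ → ℝ := fun i => abv (((p.choose i : ℕ) : k) * z₁ ^ (p - i)) * ρ ^ i with hf
  have hf1 : f 1 = (p:ℝ)⁻¹ * ρ * abv z₁ ^ (p-1) := by
    simp only [hf, Nat.choose_one_right, map_mul, map_pow, hpv, pow_one]
    ring
  have hfp : f p = ρ ^ p := by
    simp [hf, Nat.choose_self]
  set M := (p:ℝ)⁻¹ * ρ * abv z₁ ^ (p-1) with hM
  -- each term is at most max M (ρ^p)
  have hle : ∀ i ∈ Finset.Icc 1 p, f i ≤ max M (ρ^p) := by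
    intro i hi
    simp only [Finset.mem_Icc] at hi
    rcases eq_or_lt_of_le hi.2 with h | h
    · subst h; rw [hfp]; exact le_max_right _ _
    · -- 1 ≤ i < p, so p divides choose p i
      have hdvd : p ∣ p.choose i := hp.out.dvd_choose_self (by omega) h
      obtain ⟨m, hm⟩ := hdvd
      have habvc : abv ((p.choose i : ℕ) : k) ≤ (p:ℝ)⁻¹ := by
        rw [hm]
        push_cast
        rw [map_mul, hpv]
        have := habs_nat m
        calc (p:ℝ)⁻¹ * abv (m:k) ≤ (p:ℝ)⁻¹ * 1 := by
              apply mul_le_mul_of_nonneg_left this (by positivity)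
          _ = (p:ℝ)⁻¹ := mul_one _
      have hpow : abv z₁ ^ (p - i) * ρ ^ i ≤ ρ * abv z₁ ^ (p-1) := by
        have h1 : ρ ^ i = ρ * ρ ^ (i - 1) := by
          rw [← pow_succ']
          congr 1
          omega
        have h2 : ρ ^ (i-1) ≤ abv z₁ ^ (i-1) := pow_le_pow_left₀ hρ0 hρ.le _
        calc abv z₁ ^ (p - i) * ρ ^ i = ρ * (abv z₁ ^ (p-i) * ρ ^ (i-1)) := by
              rw [h1]; ring
          _ ≤ ρ * (abv z₁ ^ (p-i) * abv z₁ ^ (i-1)) := by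
              apply mul_le_mul_of_nonneg_left _ hρ0
              exact mul_le_mul_of_nonneg_left h2 (by positivity)
          _ = ρ * abv z₁ ^ (p-1) := by
              rw [← pow_add]
              congr 2
              omega
      have : f i ≤ (p:ℝ)⁻¹ * (abv z₁ ^ (p-i) * ρ ^ i) := by
        simp only [hf, map_mul, map_pow]
        calc abv ((p.choose i : ℕ) : k) * abv z₁ ^ (p-i) * ρ ^ i
            ≤ (p:ℝ)⁻¹ * abv z₁ ^ (p-i) * ρ ^ i := by
              apply mul_le_mul_of_nonneg_right _ (by positivity)
              exact mul_le_mul_of_nonneg_right habvc (by positivity)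
          _ = (p:ℝ)⁻¹ * (abv z₁ ^ (p-i) * ρ ^ i) := by ring
      refine le_trans this (le_trans ?_ (le_max_left _ _))
      rw [hM]
      calc (p:ℝ)⁻¹ * (abv z₁ ^ (p-i) * ρ ^ i) ≤ (p:ℝ)⁻¹ * (ρ * abv z₁ ^ (p-1)) :=
            mul_le_mul_of_nonneg_left hpow (by positivity)
        _ = (p:ℝ)⁻¹ * ρ * abv z₁ ^ (p-1) := by ring
  have h1mem : (1:ℕ) ∈ Finset.Icc 1 p := Finset.mem_Icc.mpr ⟨le_refl _, by omega⟩
  have hpmem : p ∈ Finset.Icc 1 p := Finset.mem_Icc.mpr ⟨by omega, le_refl _⟩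
  have hsup : (Finset.Icc 1 p).sup' (Finset.nonempty_Icc.mpr hp.out.one_lt.le) f
      = max M (ρ^p) := by
    apply le_antisymm
    · exact Finset.sup'_le _ _ hle
    · apply max_le
      · rw [← hf1]; exact Finset.le_sup' f h1mem
      · rw [← hfp]; exact Finset.le_sup' f hpmem
  -- key rpow identity
  have hcpow : ((p:ℝ) ^ (-(1 : ℝ) / ((p : ℝ) - 1))) ^ (p - 1) = (p:ℝ)⁻¹ := by
    rw [← Real.rpow_natCast ((p:ℝ) ^ (-(1 : ℝ) / ((p : ℝ) - 1))) (p-1),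
      ← Real.rpow_mul hppos.le]
    have hcast : ((p - 1 : ℕ) : ℝ) = (p:ℝ) - 1 := by
      push_cast [Nat.cast_sub (by omega : 1 ≤ p)]; ring
    rw [hcast]
    have hne : (p:ℝ) - 1 ≠ 0 := by
      have : (1:ℝ) < (p:ℝ) := by exact_mod_cast hp.out.one_lt
      linarith
    rw [div_mul_cancel₀ _ hne, Real.rpow_neg_one]
  have hcnn : (0:ℝ) ≤ (p:ℝ) ^ (-(1 : ℝ) / ((p : ℝ) - 1)) := Real.rpow_nonneg hppos.le _
  constructor
  · intro hcond
    rw [hsup, max_eq_left]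
    -- ρ^p ≤ M
    have h1 : ρ ^ p = ρ * ρ ^ (p-1) := by
      rw [← pow_succ']; congr 1; omega
    have h2 : ρ ^ (p-1) ≤ (abv z₁ * (p:ℝ) ^ (-(1 : ℝ) / ((p : ℝ) - 1))) ^ (p-1) :=
      pow_le_pow_left₀ hρ0 hcond _
    rw [h1, hM]
    calc ρ * ρ ^ (p-1) ≤ ρ * (abv z₁ * (p:ℝ) ^ (-(1 : ℝ) / ((p : ℝ) - 1))) ^ (p-1) :=
          mul_le_mul_of_nonneg_left h2 hρ0
      _ = (p:ℝ)⁻¹ * ρ * abv z₁ ^ (p-1) := by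
          rw [mul_pow, hcpow]; ring
  · intro hcond
    rw [hsup, max_eq_right]
    -- M ≤ ρ^p
    have h1 : ρ ^ p = ρ * ρ ^ (p-1) := by
      rw [← pow_succ']; congr 1; omega
    have h2 : (abv z₁ * (p:ℝ) ^ (-(1 : ℝ) / ((p : ℝ) - 1))) ^ (p-1) ≤ ρ ^ (p-1) :=
      pow_le_pow_left₀ (by positivity) hcond _
    rw [h1, hM]
    have hρpos : 0 ≤ ρ := hρ0
    calc (p:ℝ)⁻¹ * ρ * abv z₁ ^ (p-1)
        = ρ * (abv z₁ * (p:ℝ) ^ (-(1 : ℝ) / ((p : ℝ) - 1))) ^ (p-1) := by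
          rw [mul_pow, hcpow]; ring
      _ ≤ ρ * ρ ^ (p-1) := mul_le_mul_of_nonneg_left h2 hρ0
end

section
/- Let Γ be a finite graph, A an abelian group, and let Harm(Γ, A) denote the group of harmonic A-cochains on Γ: functions c on oriented edges with c(ē) = -c(e) for the reversed edge and Σ_{e into v} c(e) = 0 at every vertex v. If e₀ is an edge of Γ that is not a bridge (i.e., removing e₀ does not disconnect its connected component), and A is nontrivial, then the evaluation map ev_{e₀} : Harm(Γ, A) → A, c ↦ c(e₀), is surjective; in particular it is a nonzero homomorphism. -/
/-!
A non-bridge edge `{x, y}` lies on a closed walk `x → y ⇝ x` whose return path avoids the edge.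
Sending `a` along each dart of a closed walk gives an antisymmetric cochain supported on the
edges of the walk, and it is harmonic because every visit to a vertex enters and leaves it once.
On the edge `{x, y}` this cochain is `a`, as the return path never crosses it.
-/

open SimpleGraph

section Flow

variable {V A : Type*} [DecidableEq V] [AddCommGroup A]

def edgeFlow (a : A) (s t : V) (u v : V) : A :=
  (if (s, t) = (u, v) then a else 0) - (if (s, t) = (v, u) then a else 0)

theorem edgeFlow_swap (a : A) (s t u v : V) : edgeFlow a s t v u = -edgeFlow a s t u v := by
  simp only [edgeFlow, neg_sub]

theorem edgeFlow_self (a : A) {s t : V} (hst : s ≠ t) : edgeFlow a s t s t = a := by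
  simp [edgeFlow, hst]

theorem edgeFlow_eq_zero (a : A) {s t u v : V} (h : s(u, v) ≠ s(s, t)) :
    edgeFlow a s t u v = 0 := by
  grind [edgeFlow, Sym2.eq_swap]

theorem sum_edgeFlow [Fintype V] (a : A) (s t v : V) :
    ∑ u, edgeFlow a s t u v = (if v = t then a else 0) - (if v = s then a else 0) := by
  simp only [edgeFlow, Prod.mk.injEq, Finset.sum_sub_distrib, ite_and]
  simp [eq_comm]

namespace SimpleGraph.Walk

variable {G : SimpleGraph V}

def flow (a : A) : ∀ {s t : V}, G.Walk s t → V → V → A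
  | _, _, nil => 0
  | s, _, cons (v := w) _ p => edgeFlow a s w + p.flow a

theorem flow_swap (a : A) {s t : V} (p : G.Walk s t) (u v : V) :
    p.flow a v u = -p.flow a u v := by
  induction p with
  | nil => simp [flow]
  | cons _ p ih =>
    simp only [flow, Pi.add_apply]
    rw [ih, edgeFlow_swap, neg_add]

theorem flow_eq_zero_of_notMem_edges (a : A) {s t u v : V} (p : G.Walk s t)
    (h : s(u, v) ∉ p.edges) : p.flow a u v = 0 := by
  induction p with
  | nil => rfl
  | cons _ p ih =>
    simp only [edges_cons, List.mem_cons, not_or] at h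
    simp [flow, edgeFlow_eq_zero a h.1, ih h.2]

theorem flow_eq_zero_of_not_adj (a : A) {s t u v : V} (p : G.Walk s t) (h : ¬G.Adj u v) :
    p.flow a u v = 0 :=
  p.flow_eq_zero_of_notMem_edges a fun he => h (p.edges_subset_edgeSet he)

theorem sum_flow [Fintype V] (a : A) {s t : V} (p : G.Walk s t) (v : V) :
    ∑ u, p.flow a u v = (if v = t then a else 0) - (if v = s then a else 0) := by
  induction p with
  | nil => simp [flow]
  | cons _ p ih =>
    simp only [flow, Pi.add_apply, Finset.sum_add_distrib, sum_edgeFlow, ih]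
    abel

theorem sum_flow_of_closed [Fintype V] (a : A) {s : V} (p : G.Walk s s) (v : V) :
    ∑ u, p.flow a u v = 0 := by
  rw [sum_flow, sub_self]

end SimpleGraph.Walk

end Flow

theorem harmonic_cochain_eval_surjective_general {V : Type*} [Fintype V] [DecidableEq V]
    (G : SimpleGraph V) (x y : V) (hxy : G.Adj x y)
    (hbridge : ¬ G.IsBridge s(x, y))
    (A : Type*) [AddCommGroup A] :
    ∀ a : A, ∃ c : V → V → A,
      (∀ u v : V, c v u = - c u v) ∧
      (∀ u v : V, ¬ G.Adj u v → c u v = 0) ∧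
      (∀ v : V, ∑ u : V, c u v = 0) ∧
      c x y = a := by
  intro a
  obtain ⟨p, hp⟩ : ∃ p : G.Walk x y, s(x, y) ∉ p.edges := by
    simpa [isBridge_iff_forall_walk_mem_edges] using hbridge
  have hp' : s(x, y) ∉ p.reverse.edges := by simpa using hp
  let cycle : G.Walk x x := .cons hxy p.reverse
  refine ⟨cycle.flow a, cycle.flow_swap a, fun u v => cycle.flow_eq_zero_of_not_adj a,
    cycle.sum_flow_of_closed a, ?_⟩
  change edgeFlow a x y x y + p.reverse.flow a x y = a
  rw [edgeFlow_self a hxy.ne, p.reverse.flow_eq_zero_of_notMem_edges a hp', add_zero]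

/-- On a finite graph, if the edge `{x,y}` is not a bridge and `A` is a
nontrivial abelian group, then evaluation at this edge is a surjective
homomorphism from harmonic `A`-cochains to `A`: for every `a : A` there is a
harmonic cochain taking value `a` on the oriented edge `(x,y)`. -/
theorem harmonic_cochain_eval_surjective {V : Type*} [Fintype V] [DecidableEq V]
    (G : SimpleGraph V) (x y : V) (hxy : G.Adj x y)
    (hbridge : ¬ G.IsBridge s(x, y))
    (A : Type*) [AddCommGroup A] [Nontrivial A] :
    ∀ a : A, ∃ c : V → V → A,
      (∀ u v : V, c v u = - c u v) ∧
      (∀ u v : V, ¬ G.Adj u v → c u v = 0) ∧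
      (∀ v : V, ∑ u : V, c u v = 0) ∧
      c x y = a :=
  harmonic_cochain_eval_surjective_general G x y hxy hbridge A
end

section
/- Let k be a non-archimedean field, α ∈ k with 0 < |α| ≤ 1, and let g(T) = Σ_{k∈ℤ} a_k T^k be a Laurent series with a₀ = 1 and |a_k| |α|^k < 1 for all k ≠ 0 (convergence at radius |α|). Define A_i = Σ_{k∈ℤ} a_k C(k,i) α^{k-i} for i ≥ 0, where C(k,i) = k(k-1)⋯(k-i+1)/i! is the generalized binomial coefficient. Then |A₀| = 1 and |A_i| < |α|^{-i} for all i ≥ 1. -/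
/-- The generalized binomial coefficient `C(m,i) = m(m-1)⋯(m-i+1)/i!`, viewed
in a field of characteristic zero. -/
noncomputable def genChoose (K : Type*) [Field K] (m : ℤ) (i : ℕ) : K :=
  (∏ j ∈ Finset.range i, ((m : K) - (j : K))) / (Nat.factorial i : K)

/-- The factorial `i!` divides the falling factorial `m(m-1)⋯(m-i+1)` in `ℤ`. -/
theorem factorial_dvd_prod_sub (m : ℤ) (i : ℕ) :
    (i.factorial : ℤ) ∣ ∏ j ∈ Finset.range i, (m - j) := by
  have h := Ring.descPochhammer_eq_factorial_smul_choose (R := ℤ) m i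
  rw [← Polynomial.eval_eq_smeval] at h
  have hp : (descPochhammer ℤ i).eval m = ∏ j ∈ Finset.range i, (m - j) := by
    clear h
    induction i with
    | zero => simp
    | succ n ih => rw [descPochhammer_succ_eval, ih, Finset.prod_range_succ]
  exact ⟨Ring.choose m i, by rw [← hp, h, nsmul_eq_mul]⟩

/-- `genChoose` is (the cast of) an integer. -/
theorem genChoose_eq_intCast (K : Type*) [Field K] [CharZero K] (m : ℤ) (i : ℕ) :
    ∃ z : ℤ, genChoose K m i = (z : K) := by
  obtain ⟨z, hz⟩ := factorial_dvd_prod_sub m i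
  refine ⟨z, ?_⟩
  have hc : (∏ j ∈ Finset.range i, ((m : K) - (j : K)))
      = ((∏ j ∈ Finset.range i, (m - j) : ℤ) : K) := by
    push_cast; rfl
  rw [genChoose, hc, hz]
  push_cast
  rw [mul_comm, mul_div_assoc, div_self (by exact_mod_cast i.factorial_ne_zero), mul_one]

open IsUltrametricDist in
/-- Strict ultrametric bound on a summable series from strict bounds on the terms. -/
theorem norm_tsum_lt_of_forall_lt {M : Type*} [NormedAddCommGroup M] [CompleteSpace M]
    [IsUltrametricDist M] {ι : Type*} {f : ι → M} (hf : Summable f) {c : ℝ}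
    (hc : 0 < c) (h : ∀ i, ‖f i‖ < c) : ‖∑' i, f i‖ < c := by
  have hev : ∀ᶠ i in Filter.cofinite, ‖f i‖ < c / 2 := by
    have ht := hf.tendsto_cofinite_zero
    have := ht.eventually (Metric.eventually_nhds_iff.mpr
      ⟨c/2, by positivity, fun {y} hy => hy⟩)
    refine this.mono fun i hi => ?_
    simpa [dist_zero_right] using hi
  have hfin : {i | ¬ ‖f i‖ < c / 2}.Finite := Filter.eventually_cofinite.mp hev
  set s : Finset ι := hfin.toFinset with hs
  have h1 : Summable (f ∘ (↑) : (↑s : Set ι) → M) := .of_finite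
  have h2 : Summable (f ∘ (↑) : (↑(↑s : Set ι)ᶜ : Set ι) → M) := hf.subtype _
  have hsp := Summable.tsum_add_tsum_compl (s := (↑s : Set ι)) h1 h2
  rw [← hsp]
  have hB : ‖∑' (i : (↑(↑s : Set ι)ᶜ : Set ι)), f i‖ ≤ c / 2 := by
    apply norm_tsum_le_of_forall_le_of_nonneg (by positivity)
    rintro ⟨i, hi⟩
    have : ‖f i‖ < c / 2 := by
      by_contra hn
      exact hi (by simpa [hs] using hn)
    exact this.le
  have hA : ‖∑' (i : (↑s : Set ι)), f i‖ < c := by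
    rw [tsum_fintype]
    rcases (Finset.univ : Finset (↑s : Set ι)).eq_empty_or_nonempty with he | hne
    · simp [he, hc]
    · refine lt_of_le_of_lt (hne.norm_sum_le_sup'_norm _) ?_
      exact (Finset.sup'_lt_iff hne).mpr fun i _ => h i
  calc ‖∑' (i : (↑s : Set ι)), f i + ∑' (i : (↑(↑s : Set ι)ᶜ : Set ι)), f i‖
      ≤ max _ _ := norm_add_le_max _ _
    _ < c := max_lt hA (lt_of_le_of_lt hB (by linarith))

/-- Recentering estimate: if `g(T) = Σ_{m ∈ ℤ} a_m T^m` has `a₀ = 1` and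
`|a_m| |α|^m < 1` for all `m ≠ 0` (with `0 < |α| ≤ 1`), then the coefficients
`A_i = Σ_m a_m C(m,i) α^(m-i)` of the expansion `g(t+α) = Σ_i A_i t^i`
satisfy `|A₀| = 1` and `|A_i| < |α|^(-i)` for `i ≥ 1`. -/
theorem recentering_coeff_bounds {k : Type*} [NontriviallyNormedField k]
    [CompleteSpace k] [IsUltrametricDist k] [CharZero k]
    (α : k) (hα0 : 0 < ‖α‖) (hα1 : ‖α‖ ≤ 1)
    (a : ℤ → k) (ha0 : a 0 = 1)
    (ha : ∀ m : ℤ, m ≠ 0 → ‖a m‖ * ‖α‖ ^ m < 1)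
    (hsum : ∀ i : ℕ,
      Summable (fun m : ℤ => a m * genChoose k m i * α ^ (m - (i : ℤ)))) :
    ‖∑' m : ℤ, a m * genChoose k m 0 * α ^ (m - ((0 : ℕ) : ℤ))‖ = 1 ∧
    ∀ i : ℕ, 1 ≤ i →
      ‖∑' m : ℤ, a m * genChoose k m i * α ^ (m - (i : ℤ))‖ < ‖α‖ ^ (-(i : ℤ)) := by
  have hαne : ‖α‖ ≠ 0 := hα0.ne'
  have hgen : ∀ (m : ℤ) (i : ℕ), ‖genChoose k m i‖ ≤ 1 := by
    intro m i
    obtain ⟨z, hz⟩ := genChoose_eq_intCast k m i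
    rw [hz]
    exact IsUltrametricDist.norm_intCast_le_one k z
  -- norm of a general term
  have hterm : ∀ (i : ℕ) (m : ℤ), m ≠ 0 →
      ‖a m * genChoose k m i * α ^ (m - (i : ℤ))‖ < ‖α‖ ^ (-(i : ℤ)) := by
    intro i m hm
    rw [norm_mul, norm_mul, norm_zpow]
    have hzpow : ‖α‖ ^ (m - (i : ℤ)) = ‖α‖ ^ m * ‖α‖ ^ (-(i : ℤ)) := by
      rw [← zpow_add₀ hαne]; ring_nf
    rw [hzpow]
    have hpos : (0 : ℝ) < ‖α‖ ^ (-(i : ℤ)) := zpow_pos hα0 _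
    calc ‖a m‖ * ‖genChoose k m i‖ * (‖α‖ ^ m * ‖α‖ ^ (-(i : ℤ)))
        ≤ ‖a m‖ * 1 * (‖α‖ ^ m * ‖α‖ ^ (-(i : ℤ))) := by
          apply mul_le_mul_of_nonneg_right
          · exact mul_le_mul_of_nonneg_left (hgen m i) (norm_nonneg _)
          · positivity
      _ = (‖a m‖ * ‖α‖ ^ m) * ‖α‖ ^ (-(i : ℤ)) := by ring
      _ < 1 * ‖α‖ ^ (-(i : ℤ)) := mul_lt_mul_of_pos_right (ha m hm) hpos
      _ = ‖α‖ ^ (-(i : ℤ)) := one_mul _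
  constructor
  · -- i = 0 case
    rw [Summable.tsum_eq_add_tsum_ite (hsum 0) (0 : ℤ)]
    have hval : a 0 * genChoose k 0 0 * α ^ ((0:ℤ) - ((0:ℕ):ℤ)) = 1 := by
      simp [ha0, genChoose]
    rw [hval]
    set r : k := ∑' (n : ℤ),
      if n = 0 then 0 else a n * genChoose k n 0 * α ^ (n - ((0:ℕ):ℤ)) with hrdef
    have hr : ‖r‖ < 1 := by
      rw [hrdef]
      apply norm_tsum_lt_of_forall_lt _ one_pos
      · intro m
        by_cases hm : m = 0
        · simp [hm]
        · rw [if_neg hm]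
          have h2 := hterm 0 m hm
          calc ‖a m * genChoose k m 0 * α ^ (m - ((0:ℕ):ℤ))‖
              < ‖α‖ ^ (-((0:ℕ):ℤ)) := h2
            _ = 1 := by norm_num
      · exact Summable.summable_of_eq_zero_or_self (hsum 0)
          (fun m => by by_cases hm : m = 0 <;> simp [hm])
    have h1r : ‖(1 : k)‖ ≠ ‖r‖ := by
      rw [norm_one]; exact fun h => absurd h.symm (ne_of_lt hr)
    rw [IsUltrametricDist.norm_add_eq_max_of_norm_ne_norm h1r, norm_one]
    exact max_eq_left hr.le
  · intro i hi
    apply norm_tsum_lt_of_forall_lt (hsum i) (zpow_pos hα0 _)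
    intro m
    by_cases hm : m = 0
    · subst hm
      have : genChoose k 0 i = 0 := by
        rw [genChoose]
        have : (∏ j ∈ Finset.range i, (((0 : ℤ) : k) - (j : k))) = 0 := by
          apply Finset.prod_eq_zero (Finset.mem_range.mpr hi)
          simp
        rw [this, zero_div]
      simp only [this, mul_zero, zero_mul, norm_zero]
      exact zpow_pos hα0 _
    · exact hterm i m hm
end
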